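/- arXiv:1609.02300 — 6 statements merged into one kernel-verified Lean document; each statement's English description precedes it below -/
import Mathlib

section
/- For nonnegative reals q_1, …, q_M and x_1, …, x_V, and any fixed v ∈ {1,…,V}, the identity ∑ n_v · q_{n_1+⋯+n_V} · ∏_{u=1}^V x_u^{n_u}/n_u! = x_v · χ(x_1 + ⋯ + x_V) holds, where the sum is over all tuples (n_1,…,n_V) of nonnegative integers with n_1 + ⋯ + n_V ≤ M, and χ(x) = ∑_{k=1}^M q_k x^{k-1}/(k-1)!. -/
open Finset

lemma aux_exp_sum (V : ℕ) (x : Fin V → ℝ) (k : ℕ) :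
    ∑ n ∈ piAntidiag (univ : Finset (Fin V)) k,
      ∏ u, x u ^ (n u) / (n u).factorial = (∑ u, x u) ^ k / k.factorial := by
  rw [Finset.sum_pow_eq_sum_piAntidiag, Finset.sum_div]
  refine Finset.sum_congr rfl fun n hn => ?_
  rw [Finset.mem_piAntidiag] at hn
  have hspec0 := Nat.multinomial_spec (univ : Finset (Fin V)) n
  rw [hn.1] at hspec0
  have hspec : (∏ u, ((n u).factorial : ℝ)) * (Nat.multinomial univ n : ℝ)
      = (k.factorial : ℝ) := by exact_mod_cast hspec0
  rw [Finset.prod_div_distrib, ← hspec]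
  have h1 : (0:ℝ) < ∏ u, ((n u).factorial : ℝ) := by positivity
  have h2 : (0:ℝ) < (Nat.multinomial univ n : ℝ) := by
    exact_mod_cast Nat.multinomial_pos ..
  field_simp

lemma aux_shift (V : ℕ) (x : Fin V → ℝ) (v : Fin V) (k : ℕ) :
    ∑ n ∈ piAntidiag (univ : Finset (Fin V)) (k + 1),
      (n v : ℝ) * ∏ u, x u ^ (n u) / (n u).factorial
    = x v * ∑ n ∈ piAntidiag (univ : Finset (Fin V)) k,
      ∏ u, x u ^ (n u) / (n u).factorial := by
  rw [Finset.mul_sum]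
  rw [← Finset.sum_filter_of_ne (p := fun n => n v ≠ 0)
    (fun n _ h => by intro h0; apply h; simp [h0])]
  refine Finset.sum_nbij' (fun n => Function.update n v (n v - 1))
    (fun n => Function.update n v (n v + 1)) ?_ ?_ ?_ ?_ ?_
  · intro n hn
    simp only [Finset.mem_filter, Finset.mem_piAntidiag] at hn ⊢
    refine ⟨?_, fun i _ => Finset.mem_univ i⟩
    obtain ⟨⟨hsum, -⟩, hnv⟩ := hn
    rw [Finset.sum_update_of_mem (Finset.mem_univ v), Finset.sdiff_singleton_eq_erase]
    rw [← Finset.add_sum_erase _ _ (Finset.mem_univ v)] at hsum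
    omega
  · intro n hn
    simp only [Finset.mem_filter, Finset.mem_piAntidiag] at hn ⊢
    obtain ⟨hsum, -⟩ := hn
    refine ⟨⟨?_, fun i _ => Finset.mem_univ i⟩, by simp⟩
    rw [Finset.sum_update_of_mem (Finset.mem_univ v), Finset.sdiff_singleton_eq_erase]
    rw [← Finset.add_sum_erase _ _ (Finset.mem_univ v)] at hsum
    omega
  · intro n hn
    simp only [Finset.mem_filter] at hn
    ext i
    rcases eq_or_ne i v with rfl | h
    · simp only [Function.update_self]
      omega
    · simp [Function.update_of_ne h]
  · intro n hn
    ext i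
    rcases eq_or_ne i v with rfl | h
    · simp only [Function.update_self]; omega
    · simp [Function.update_of_ne h]
  · intro n hn
    simp only [Finset.mem_filter, Finset.mem_piAntidiag] at hn
    obtain ⟨-, hnv⟩ := hn
    rw [← Finset.mul_prod_erase _ _ (Finset.mem_univ v),
        ← Finset.mul_prod_erase _ _ (Finset.mem_univ v)]
    have hprod : ∀ i ∈ Finset.univ.erase v,
        x i ^ (Function.update n v (n v - 1) i) / ((Function.update n v (n v - 1) i).factorial : ℝ)
        = x i ^ (n i) / ((n i).factorial : ℝ) := by
      intro i hi
      rw [Function.update_of_ne (Finset.ne_of_mem_erase hi)]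
    rw [Finset.prod_congr rfl hprod]
    simp only [Function.update_self]
    obtain ⟨j, hj⟩ : ∃ j, n v = j + 1 := ⟨n v - 1, by omega⟩
    rw [hj]
    simp only [Nat.add_sub_cancel]
    rw [← mul_assoc, ← mul_assoc]
    congr 1
    rw [Nat.factorial_succ]
    push_cast
    have : (0:ℝ) < (j.factorial : ℝ) := by positivity
    field_simp
    ring

theorem stmt_3 (M V : ℕ) (q : ℕ → ℝ) (x : Fin V → ℝ) (v : Fin V)
    (hq : ∀ k, 1 ≤ k → k ≤ M → 0 ≤ q k)
    (hx : ∀ u, 0 ≤ x u) :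
    ∑ n ∈ (Fintype.piFinset fun _ : Fin V => Finset.range (M + 1)).filter
        (fun n => ∑ u, n u ≤ M),
      (n v : ℝ) * q (∑ u, n u) * ∏ u, x u ^ (n u) / (n u).factorial
    = x v * ∑ k ∈ Finset.range M, q (k + 1) * (∑ u, x u) ^ k / k.factorial := by
  rw [← Finset.sum_fiberwise_of_maps_to (g := fun n => ∑ u, n u) (t := Finset.range (M + 1))
    (fun n hn => by simp only [Finset.mem_filter] at hn; simp [Nat.lt_succ_iff, hn.2])]
  have hset : ∀ m ∈ Finset.range (M + 1),
      ((Fintype.piFinset fun _ : Fin V => Finset.range (M + 1)).filter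
        (fun n => ∑ u, n u ≤ M)).filter (fun n => ∑ u, n u = m)
      = piAntidiag (univ : Finset (Fin V)) m := by
    intro m hm
    rw [Finset.mem_range, Nat.lt_succ_iff] at hm
    ext n
    simp only [Finset.mem_filter, Fintype.mem_piFinset, Finset.mem_range, Finset.mem_piAntidiag,
      Nat.lt_succ_iff]
    constructor
    · rintro ⟨⟨-, -⟩, h⟩
      exact ⟨h, fun i _ => Finset.mem_univ i⟩
    · rintro ⟨h, -⟩
      have hle : ∀ u, n u ≤ m := fun u => h ▸ Finset.single_le_sum (f := n) (fun _ _ => Nat.zero_le _) (Finset.mem_univ u)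
      exact ⟨⟨fun u => le_trans (hle u) hm, h ▸ hm⟩, h⟩
  rw [Finset.sum_congr rfl (fun m hm => by rw [hset m hm])]
  have hterm : ∀ m : ℕ, ∑ n ∈ piAntidiag (univ : Finset (Fin V)) m,
      (n v : ℝ) * q (∑ u, n u) * ∏ u, x u ^ (n u) / (n u).factorial
      = q m * ∑ n ∈ piAntidiag (univ : Finset (Fin V)) m,
        (n v : ℝ) * ∏ u, x u ^ (n u) / (n u).factorial := by
    intro m
    rw [Finset.mul_sum]
    refine Finset.sum_congr rfl fun n hn => ?_
    rw [Finset.mem_piAntidiag] at hn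
    rw [hn.1]
    ring
  rw [Finset.sum_congr rfl (fun m _ => hterm m)]
  rw [Finset.sum_range_succ']
  have h0 : ∑ n ∈ piAntidiag (univ : Finset (Fin V)) (0 : ℕ),
      (n v : ℝ) * ∏ u, x u ^ (n u) / (n u).factorial = 0 := by
    refine Finset.sum_eq_zero fun n hn => ?_
    rw [Finset.mem_piAntidiag] at hn
    have : n v = 0 := by
      have h1 := Finset.single_le_sum (f := n) (fun _ _ => Nat.zero_le _) (Finset.mem_univ v)
      have h2 : ∑ x : Fin V, n x = 0 := hn.1
      omega
    simp [this]
  rw [h0, mul_zero, add_zero, Finset.mul_sum]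
  refine Finset.sum_congr rfl fun k _ => ?_
  rw [aux_shift, aux_exp_sum]
  ring
end

section
/- Let χ(γ) = ∑_{k=1}^M q_k γ^{k-1}/(k-1)! with q_k ≥ 0 not all zero, τ ≥ 1, and define f(γ) = γ χ(γ) e^{-γ} / (e^{-γ} + τ(1 - e^{-γ})) for γ ≥ 0. If q_1 ≤ 2q_2 ≤ 3q_3 ≤ ⋯ ≤ M q_M, then f is unimodal on [0, ∞): there exists γ* ≥ 0 such that f is nondecreasing on [0, γ*] and nonincreasing on [γ*, ∞). -/
/-!
With `p γ = γ χ(γ)` and `D γ = e^{-γ} + τ (1 - e^{-γ})`, the derivative of `f = p e^{-γ} / D` is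
`e^{-γ} G / D²` where `G = D p' - τ p`, and `G' = D (p'' - p')`. Now `p` is the exponential
generating polynomial of `c k = k q_k`, which the hypothesis makes nondecreasing, so
`(p'' - p') / γ^(M-1)` decreases on `(0, ∞)` and `p'' - p'` changes sign at most once, from `+`
to `-`. Hence `G` rises and then falls starting from `G 0 = q_1 ≥ 0`, so it too changes sign at
most once; it is negative for `γ > M`, where `p' < p`. The peak of `f` is at the sign change of `G`.
-/

open Real Finset Set

/-- `g` is nonnegative on an initial segment of `(a, ∞)` and negative beyond it. -/
def SingleCrossingDown (a : ℝ) (g : ℝ → ℝ) : Prop :=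
  ∀ ⦃x y⦄, a < x → x ≤ y → 0 ≤ g y → 0 ≤ g x

lemma monotoneOn_of_hasDerivAt_of_nonneg {f f' : ℝ → ℝ} {D : Set ℝ} (hD : Convex ℝ D)
    (hf : ∀ x ∈ D, HasDerivAt f (f' x) x) (hf' : ∀ x ∈ interior D, 0 ≤ f' x) :
    MonotoneOn f D :=
  monotoneOn_of_hasDerivWithinAt_nonneg hD (fun x hx ↦ (hf x hx).continuousAt.continuousWithinAt)
    (fun x hx ↦ (hf x (interior_subset hx)).hasDerivWithinAt) hf'

lemma antitoneOn_of_hasDerivAt_of_nonpos {f f' : ℝ → ℝ} {D : Set ℝ} (hD : Convex ℝ D)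
    (hf : ∀ x ∈ D, HasDerivAt f (f' x) x) (hf' : ∀ x ∈ interior D, f' x ≤ 0) :
    AntitoneOn f D :=
  antitoneOn_of_hasDerivWithinAt_nonpos hD (fun x hx ↦ (hf x hx).continuousAt.continuousWithinAt)
    (fun x hx ↦ (hf x (interior_subset hx)).hasDerivWithinAt) hf'

namespace SingleCrossingDown

variable {a : ℝ} {g : ℝ → ℝ}

lemma mul_left (hg : SingleCrossingDown a g) {φ : ℝ → ℝ} (hφ : ∀ x, a < x → 0 < φ x) :
    SingleCrossingDown a (fun x ↦ φ x * g x) := fun x y hx hxy hy ↦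
  mul_nonneg (hφ x hx).le <| hg hx hxy <| nonneg_of_mul_nonneg_right hy (hφ y (hx.trans_le hxy))

/-- `g` rises while `g'` is nonnegative and falls afterwards, so from `0 ≤ g a` it cannot come
back to `0 ≤ g` once it has dropped below `0`. -/
lemma of_hasDerivAt {g' : ℝ → ℝ} (hg : ∀ x, a ≤ x → HasDerivAt g (g' x) x) (ha : 0 ≤ g a)
    (hg' : SingleCrossingDown a g') : SingleCrossingDown a g := by
  intro x y hx hxy hy
  by_cases hx' : 0 ≤ g' x
  · have hmono : MonotoneOn g (Icc a x) :=
      monotoneOn_of_hasDerivAt_of_nonneg (convex_Icc a x) (fun z hz ↦ hg z hz.1) fun z hz ↦ by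
        rw [interior_Icc] at hz
        exact hg' hz.1 hz.2.le hx'
    exact ha.trans <| hmono (left_mem_Icc.2 hx.le) (right_mem_Icc.2 hx.le) hx.le
  · have hanti : AntitoneOn g (Icc x y) :=
      antitoneOn_of_hasDerivAt_of_nonpos (convex_Icc x y)
        (fun z hz ↦ hg z (hx.le.trans hz.1)) fun z hz ↦ by
        rw [interior_Icc] at hz
        by_contra! hz'
        exact hx' (hg' hx hz.1.le hz'.le)
    exact hy.trans <| hanti (left_mem_Icc.2 hxy) (right_mem_Icc.2 hxy) hxy

end SingleCrossingDown

theorem exists_monotoneOn_Icc_antitoneOn_Ici {f f' : ℝ → ℝ} {a T : ℝ}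
    (hf : ∀ x, a ≤ x → HasDerivAt f (f' x) x) (hf' : SingleCrossingDown a f')
    (hT : ∀ x, T < x → f' x < 0) :
    ∃ s, a ≤ s ∧ MonotoneOn f (Icc a s) ∧ AntitoneOn f (Ici s) := by
  set S := insert a {x | a < x ∧ 0 ≤ f' x}
  have hS : BddAbove S := ⟨max a T, by
    rintro x (rfl | ⟨-, hx⟩)
    · exact le_max_left _ _
    · exact le_max_of_le_right <| not_lt.1 fun hTx ↦ (hT x hTx).not_ge hx⟩
  have has : a ≤ sSup S := le_csSup hS (mem_insert a _)
  refine ⟨sSup S, has, ?_, ?_⟩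
  · refine monotoneOn_of_hasDerivAt_of_nonneg (convex_Icc _ _) (fun x hx ↦ hf x hx.1) ?_
    intro x hx
    rw [interior_Icc] at hx
    obtain ⟨y, hyS, hxy⟩ := exists_lt_of_lt_csSup (insert_nonempty _ _) hx.2
    rcases hyS with rfl | ⟨-, hy⟩
    · exact absurd hx.1 hxy.not_gt
    · exact hf' hx.1 hxy.le hy
  · refine antitoneOn_of_hasDerivAt_of_nonpos (convex_Ici _) (fun x hx ↦ hf x (has.trans hx)) ?_
    intro x hx
    rw [interior_Ici] at hx
    by_contra! hx'
    exact (le_csSup hS (mem_insert_of_mem _ ⟨has.trans_lt hx, hx'.le⟩)).not_gt hx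

section Throughput

variable {τ : ℝ} {p p' p'' : ℝ → ℝ}

noncomputable def cycleLen (τ x : ℝ) : ℝ := exp (-x) + τ * (1 - exp (-x))

lemma cycleLen_pos (hτ : 0 ≤ τ) {x : ℝ} (hx : 0 ≤ x) : 0 < cycleLen τ x := by
  have : exp (-x) ≤ 1 := exp_le_one_iff.2 (neg_nonpos.2 hx)
  unfold cycleLen
  nlinarith [exp_pos (-x)]

lemma cycleLen_le (hτ : 1 ≤ τ) {x : ℝ} (hx : 0 ≤ x) : cycleLen τ x ≤ τ := by
  have : exp (-x) ≤ 1 := exp_le_one_iff.2 (neg_nonpos.2 hx)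
  unfold cycleLen
  nlinarith [exp_pos (-x)]

lemma hasDerivAt_exp_neg (x : ℝ) : HasDerivAt (fun y ↦ exp (-y)) (-exp (-x)) x := by
  simpa using (hasDerivAt_neg x).exp

lemma hasDerivAt_cycleLen (τ x : ℝ) : HasDerivAt (cycleLen τ) ((τ - 1) * exp (-x)) x := by
  refine ((hasDerivAt_exp_neg x).fun_add
    (((hasDerivAt_exp_neg x).const_sub 1).const_mul τ)).congr_deriv ?_
  ring

lemma hasDerivAt_throughput {x : ℝ} (hp : HasDerivAt p (p' x) x) (hx : cycleLen τ x ≠ 0) :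
    HasDerivAt (fun y ↦ p y * exp (-y) / cycleLen τ y)
      (exp (-x) / cycleLen τ x ^ 2 * (cycleLen τ x * p' x - τ * p x)) x := by
  refine ((hp.fun_mul (hasDerivAt_exp_neg x)).fun_div (hasDerivAt_cycleLen τ x) hx).congr_deriv ?_
  unfold cycleLen at hx ⊢
  field_simp
  ring

lemma hasDerivAt_cycleLen_mul_sub {x : ℝ} (hp : HasDerivAt p (p' x) x)
    (hp' : HasDerivAt p' (p'' x) x) :
    HasDerivAt (fun y ↦ cycleLen τ y * p' y - τ * p y) (cycleLen τ x * (p'' x - p' x)) x := by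
  refine (((hasDerivAt_cycleLen τ x).fun_mul hp').fun_sub (hp.const_mul τ)).congr_deriv ?_
  unfold cycleLen
  ring

theorem exists_monotoneOn_antitoneOn_throughput (hτ : 1 ≤ τ) (hp : ∀ x, HasDerivAt p (p' x) x)
    (hp' : ∀ x, HasDerivAt p' (p'' x) x) (h0 : τ * p 0 ≤ p' 0)
    (hp'_nonneg : ∀ x, 0 ≤ x → 0 ≤ p' x) (hcross : SingleCrossingDown 0 (fun x ↦ p'' x - p' x))
    {T : ℝ} (hT : ∀ x, T < x → p' x < p x) :
    ∃ s, 0 ≤ s ∧ MonotoneOn (fun x ↦ p x * exp (-x) / cycleLen τ x) (Icc 0 s) ∧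
      AntitoneOn (fun x ↦ p x * exp (-x) / cycleLen τ x) (Ici s) := by
  have hτ0 : 0 ≤ τ := by linarith
  have hG : SingleCrossingDown 0 (fun x ↦ cycleLen τ x * p' x - τ * p x) :=
    .of_hasDerivAt (fun x _ ↦ hasDerivAt_cycleLen_mul_sub (hp x) (hp' x))
      (by simpa [cycleLen] using h0) (hcross.mul_left fun x hx ↦ cycleLen_pos hτ0 hx.le)
  refine exists_monotoneOn_Icc_antitoneOn_Ici
    (fun x hx ↦ hasDerivAt_throughput (hp x) (cycleLen_pos hτ0 hx).ne')
    (hG.mul_left fun x hx ↦ by have := cycleLen_pos hτ0 hx.le; positivity)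
    (T := max 0 T) fun x hx ↦ ?_
  have hx0 : 0 < x := (le_max_left _ _).trans_lt hx
  have := cycleLen_pos hτ0 hx0.le
  refine mul_neg_of_pos_of_neg (by positivity) ?_
  nlinarith [mul_nonneg (sub_nonneg.2 (cycleLen_le hτ hx0.le)) (hp'_nonneg x hx0.le),
    mul_pos (by linarith : 0 < τ) (sub_pos.2 (hT x ((le_max_right _ _).trans_lt hx)))]

end Throughput

noncomputable def egfPoly (c : ℕ → ℝ) (n : ℕ) (x : ℝ) : ℝ :=
  ∑ k ∈ range n, c k * (x ^ k / k.factorial)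

lemma pow_succ_div_factorial_succ (x : ℝ) (k : ℕ) :
    x ^ (k + 1) / (k + 1).factorial = x / (k + 1) * (x ^ k / k.factorial) := by
  rw [pow_succ, Nat.factorial_succ]
  push_cast
  field_simp

lemma hasDerivAt_pow_succ_div_factorial (k : ℕ) (x : ℝ) :
    HasDerivAt (fun y : ℝ ↦ y ^ (k + 1) / (k + 1).factorial) (x ^ k / k.factorial) x := by
  refine ((hasDerivAt_pow (k + 1) x).div_const _).congr_deriv ?_
  rw [Nat.factorial_succ]
  push_cast
  field_simp

section EgfPoly

variable {c : ℕ → ℝ} {n : ℕ} {x : ℝ}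

lemma egfPoly_succ (c : ℕ → ℝ) (n : ℕ) (x : ℝ) :
    egfPoly c (n + 1) x = ∑ k ∈ range n, c (k + 1) * (x ^ (k + 1) / (k + 1).factorial) + c 0 := by
  simp [egfPoly, sum_range_succ']

lemma hasDerivAt_egfPoly (c : ℕ → ℝ) (n : ℕ) (x : ℝ) :
    HasDerivAt (egfPoly c (n + 1)) (egfPoly (fun k ↦ c (k + 1)) n x) x := by
  rw [show egfPoly c (n + 1) = _ from funext (egfPoly_succ c n)]
  exact (HasDerivAt.fun_sum fun k _ ↦
    (hasDerivAt_pow_succ_div_factorial k x).const_mul (c (k + 1))).add_const (c 0)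

lemma egfPoly_nonneg (hc : ∀ k < n, 0 ≤ c k) (hx : 0 ≤ x) : 0 ≤ egfPoly c n x :=
  sum_nonneg fun k hk ↦ mul_nonneg (hc k (mem_range.1 hk)) (by positivity)

lemma egfPoly_shift_sub_egfPoly (c : ℕ → ℝ) (n : ℕ) (x : ℝ) :
    egfPoly (fun k ↦ c (k + 1)) n x - egfPoly c (n + 1) x =
      ∑ k ∈ range n, (c (k + 1) - c k) * (x ^ k / k.factorial) - c n * (x ^ n / n.factorial) := by
  simp only [egfPoly, sum_range_succ, sub_mul, sum_sub_distrib]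
  ring

/-- Dividing by `x ^ n` turns the polynomial into `∑ d k x^(k-n) - e`, which decreases in `x`. -/
lemma singleCrossingDown_sum_sub_pow {d : ℕ → ℝ} (hd : ∀ k < n, 0 ≤ d k) (e : ℝ) :
    SingleCrossingDown 0 (fun x ↦ ∑ k ∈ range n, d k * x ^ k - e * x ^ n) := by
  intro x y hx hxy hy
  have key : x ^ n * (∑ k ∈ range n, d k * y ^ k - e * y ^ n) ≤
      y ^ n * (∑ k ∈ range n, d k * x ^ k - e * x ^ n) := by
    rw [mul_sub, mul_sub, mul_left_comm (x ^ n) e, mul_left_comm (y ^ n) e,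
      mul_comm (x ^ n) (y ^ n), sub_le_sub_iff_right, mul_sum, mul_sum]
    refine sum_le_sum fun k hk ↦ ?_
    have hkn := (mem_range.1 hk).le
    rw [← pow_mul_pow_sub x hkn, ← pow_mul_pow_sub y hkn]
    have := hd k (mem_range.1 hk)
    have := hx.trans_le hxy
    calc x ^ k * x ^ (n - k) * (d k * y ^ k) = d k * x ^ k * y ^ k * x ^ (n - k) := by ring
      _ ≤ d k * x ^ k * y ^ k * y ^ (n - k) :=
        mul_le_mul_of_nonneg_left (pow_le_pow_left₀ hx.le hxy _) (by positivity)
      _ = y ^ k * y ^ (n - k) * (d k * x ^ k) := by ring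
  exact nonneg_of_mul_nonneg_right ((mul_nonneg (pow_nonneg hx.le n) hy).trans key)
    (pow_pos (hx.trans_le hxy) n)

lemma singleCrossingDown_egfPoly_shift_sub (hc : ∀ k < n, c k ≤ c (k + 1)) :
    SingleCrossingDown 0 (fun x ↦ egfPoly (fun k ↦ c (k + 1)) n x - egfPoly c (n + 1) x) := by
  convert singleCrossingDown_sum_sub_pow (d := fun k ↦ (c (k + 1) - c k) / k.factorial)
    (fun k hk ↦ div_nonneg (sub_nonneg.2 (hc k hk)) (by positivity)) (c n / n.factorial) using 2
    with x
  rw [egfPoly_shift_sub_egfPoly]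
  congr 1
  · exact sum_congr rfl fun k _ ↦ by ring
  · ring

/-- Termwise, `x ^ (k + 1) / (k + 1)! = x / (k + 1) * (x ^ k / k!)` with `x / (k + 1) > 1`. -/
lemma egfPoly_shift_lt_egfPoly (hc0 : c 0 = 0) (hc : ∀ k ≤ n, 0 ≤ c k) (hcn : 0 < c n)
    (hx : (n : ℝ) < x) : egfPoly (fun k ↦ c (k + 1)) n x < egfPoly c (n + 1) x := by
  obtain ⟨m, rfl⟩ : ∃ m, n = m + 1 := Nat.exists_eq_succ_of_ne_zero (by rintro rfl; linarith)
  push_cast at hx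
  have hx0 : 0 < x := by linarith [(m.cast_nonneg : (0 : ℝ) ≤ m)]
  rw [egfPoly_succ c, hc0, add_zero]
  refine sum_lt_sum (fun k hk ↦ ?_) ⟨m, self_mem_range_succ m, ?_⟩
  · have hkm : k < m + 1 := mem_range.1 hk
    have hk : (k : ℝ) + 1 ≤ x := by
      have : (k : ℝ) ≤ m := by exact_mod_cast Nat.lt_succ_iff.1 hkm
      linarith
    rw [pow_succ_div_factorial_succ]
    exact mul_le_mul_of_nonneg_left (le_mul_of_one_le_left (by positivity)
      ((one_le_div (by positivity)).2 hk)) (hc _ (by omega))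
  · rw [pow_succ_div_factorial_succ]
    exact mul_lt_mul_of_pos_left (lt_mul_of_one_lt_left (by positivity)
      ((one_lt_div (by positivity)).2 hx)) hcn

end EgfPoly

lemma egfPoly_natCast_mul (q : ℕ → ℝ) (n : ℕ) (x : ℝ) :
    egfPoly (fun k ↦ k * q k) (n + 1) x = x * ∑ k ∈ range n, q (k + 1) * x ^ k / k.factorial := by
  rw [egfPoly_succ, mul_sum, Nat.cast_zero, zero_mul, add_zero]
  refine sum_congr rfl fun k _ ↦ ?_
  rw [pow_succ_div_factorial_succ]
  push_cast
  field_simp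

theorem stmt_4_general (M : ℕ) (q : ℕ → ℝ) (τ : ℝ)
    (hq : ∀ k, 1 ≤ k → k ≤ M → 0 ≤ q k)
    (hq0 : ∃ k, 1 ≤ k ∧ k ≤ M ∧ q k ≠ 0)
    (hτ : 1 ≤ τ)
    (hmono : ∀ k, 1 ≤ k → k ≤ M - 1 → (k : ℝ) * q k ≤ (k + 1 : ℝ) * q (k + 1)) :
    ∃ γs : ℝ, 0 ≤ γs ∧
      MonotoneOn
        (fun γ : ℝ =>
          γ * (∑ k ∈ Finset.range M, q (k + 1) * γ ^ k / k.factorial) * Real.exp (-γ) /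
            (Real.exp (-γ) + τ * (1 - Real.exp (-γ))))
        (Set.Icc 0 γs) ∧
      AntitoneOn
        (fun γ : ℝ =>
          γ * (∑ k ∈ Finset.range M, q (k + 1) * γ ^ k / k.factorial) * Real.exp (-γ) /
            (Real.exp (-γ) + τ * (1 - Real.exp (-γ))))
        (Set.Ici γs) := by
  obtain ⟨k₀, hk₀, hk₀M, hqk₀⟩ := hq0
  obtain ⟨n, rfl⟩ : ∃ n, M = n + 1 := ⟨M - 1, by omega⟩
  set c : ℕ → ℝ := fun k ↦ k * q k
  have hc_nonneg : ∀ k ≤ n + 1, 0 ≤ c k := fun k hk ↦ by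
    rcases k.eq_zero_or_pos with rfl | hk0
    · simp [c]
    · exact mul_nonneg k.cast_nonneg (hq k hk0 hk)
  have hc_mono : MonotoneOn c (Set.Icc 1 (n + 1)) :=
    monotoneOn_of_le_add_one ordConnected_Icc fun k _ hk hk1 ↦ by
      simpa [c] using hmono k hk.1 (by have := hk1.2; omega)
  have hc_pos : 0 < c (n + 1) :=
    (mul_pos (by exact_mod_cast hk₀) ((hq k₀ hk₀ hk₀M).lt_of_ne' hqk₀)).trans_le
      (hc_mono ⟨hk₀, hk₀M⟩ ⟨by omega, le_rfl⟩ hk₀M)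
  have hp0 : egfPoly c (n + 2) 0 = 0 := by simp [egfPoly_succ c, c]
  have hfun : (fun γ : ℝ ↦
      γ * (∑ k ∈ range (n + 1), q (k + 1) * γ ^ k / k.factorial) * exp (-γ) /
        (exp (-γ) + τ * (1 - exp (-γ)))) =
      fun γ ↦ egfPoly c (n + 2) γ * exp (-γ) / cycleLen τ γ := by
    funext γ
    rw [egfPoly_natCast_mul]
    rfl
  rw [hfun]
  refine exists_monotoneOn_antitoneOn_throughput hτ (hasDerivAt_egfPoly c (n + 1))
    (hasDerivAt_egfPoly _ n) ?_ (fun x hx ↦ egfPoly_nonneg (fun k hk ↦ hc_nonneg _ hk) hx)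
    (singleCrossingDown_egfPoly_shift_sub fun k hk ↦
      hc_mono ⟨by omega, by omega⟩ ⟨by omega, by omega⟩ (by omega))
    (T := (n + 1 : ℕ)) fun x hx ↦ egfPoly_shift_lt_egfPoly (by simp [c]) hc_nonneg hc_pos hx
  rw [hp0, mul_zero]
  exact egfPoly_nonneg (fun k hk ↦ hc_nonneg _ hk) le_rfl

theorem stmt_4 (M : ℕ) (q : ℕ → ℝ) (τ : ℝ)
    (hM : 1 ≤ M)
    (hq : ∀ k, 1 ≤ k → k ≤ M → 0 ≤ q k)
    (hq0 : ∃ k, 1 ≤ k ∧ k ≤ M ∧ q k ≠ 0)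
    (hτ : 1 ≤ τ)
    (hmono : ∀ k, 1 ≤ k → k ≤ M - 1 → (k : ℝ) * q k ≤ (k + 1 : ℝ) * q (k + 1)) :
    ∃ γs : ℝ, 0 ≤ γs ∧
      MonotoneOn
        (fun γ : ℝ =>
          γ * (∑ k ∈ Finset.range M, q (k + 1) * γ ^ k / k.factorial) * Real.exp (-γ) /
            (Real.exp (-γ) + τ * (1 - Real.exp (-γ))))
        (Set.Icc 0 γs) ∧
      AntitoneOn
        (fun γ : ℝ =>
          γ * (∑ k ∈ Finset.range M, q (k + 1) * γ ^ k / k.factorial) * Real.exp (-γ) /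
            (Real.exp (-γ) + τ * (1 - Real.exp (-γ))))
        (Set.Ici γs) :=
  stmt_4_general M q τ hq hq0 hτ hmono
end

section
/- With χ(γ) = q_1 + q_2 γ (i.e., M = 2), q_1, q_2 ≥ 0 not both zero, and τ ≥ 1, the function f(γ) = γ χ(γ) e^{-γ} / (e^{-γ} + τ(1 - e^{-γ})) is unimodal on [0, ∞). -/
/-!
Multiplying numerator and denominator by `e^γ` turns `f` into `γ χ(γ) / D(γ)` with
`D(γ) = 1 + τ (e^γ - 1) > 0`, whose derivative is `e^γ ψ(γ) / D(γ)²` for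
`ψ(γ) = χ'(γ) ((1 - τ) e^{-γ} + τ) - τ γ χ(γ)`. Since
`ψ'(γ) = (2 q₂ - q₁ - 2 q₂ γ) (τ - (τ - 1) e^{-γ})` with a positive second factor, `ψ` first
rises and then falls; as `ψ(0) = q₁ ≥ 0` and `ψ ≤ 0` for `γ ≥ 2`, `ψ` changes sign at most once,
from `+` to `-`.
-/

open Real Set

theorem monotoneOn_antitoneOn_of_hasDerivAt {f f' : ℝ → ℝ} {a b : ℝ} (hab : a ≤ b)
    (hf : ∀ x ∈ Ici a, HasDerivAt f (f' x) x)
    (hf'_nonneg : ∀ x ∈ Ioo a b, 0 ≤ f' x) (hf'_nonpos : ∀ x ∈ Ioi b, f' x ≤ 0) :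
    MonotoneOn f (Icc a b) ∧ AntitoneOn f (Ici b) := by
  have hcont : ContinuousOn f (Ici a) := fun x hx => (hf x hx).continuousAt.continuousWithinAt
  constructor
  · refine monotoneOn_of_hasDerivWithinAt_nonneg (convex_Icc a b)
      (hcont.mono Icc_subset_Ici_self) (fun x hx => ?_) (by simpa only [interior_Icc])
    rw [interior_Icc] at hx
    exact (hf x (mem_Ici.2 hx.1.le)).hasDerivWithinAt
  · refine antitoneOn_of_hasDerivWithinAt_nonpos (convex_Ici b)
      (hcont.mono (Ici_subset_Ici.2 hab)) (fun x hx => ?_) (by simpa only [interior_Ici])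
    rw [interior_Ici] at hx
    exact (hf x (mem_Ici.2 (hab.trans hx.le))).hasDerivWithinAt

theorem exists_nonneg_nonpos_of_monotoneOn_antitoneOn {ψ : ℝ → ℝ} {a c T : ℝ}
    (hmono : MonotoneOn ψ (Icc a c)) (hanti : AntitoneOn ψ (Ici c)) (ha : 0 ≤ ψ a)
    (hT : ∀ x, T ≤ x → ψ x ≤ 0) :
    ∃ b, a ≤ b ∧ (∀ x ∈ Ico a b, 0 ≤ ψ x) ∧ ∀ x ∈ Ioi b, ψ x ≤ 0 := by
  set S := insert a {x | a ≤ x ∧ 0 < ψ x}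
  have hbdd : BddAbove S := by
    refine ⟨max a T, ?_⟩
    rintro x (rfl | ⟨-, hx⟩)
    · exact le_max_left _ _
    · by_contra! h
      exact (hT x (max_lt_iff.1 h).2.le).not_gt hx
  have hab : a ≤ sSup S := le_csSup hbdd (mem_insert a _)
  refine ⟨sSup S, hab, ?_, fun x hx => ?_⟩
  · rintro x ⟨hax, hxb⟩
    obtain ⟨s, hs, hxs⟩ := exists_lt_of_lt_csSup (insert_nonempty _ _) hxb
    rcases hs with rfl | ⟨-, hs⟩
    · exact absurd hax hxs.not_ge
    · rcases le_or_gt x c with hxc | hcx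
      · exact ha.trans (hmono ⟨le_rfl, hax.trans hxc⟩ ⟨hax, hxc⟩ hax)
      · exact hs.le.trans (hanti hcx.le (hcx.trans hxs).le hxs.le)
  · by_contra! h
    exact (le_csSup hbdd (Or.inr ⟨hab.trans hx.le, h⟩)).not_gt hx

namespace LinearChi

variable (q1 q2 τ : ℝ)

noncomputable def ratio (γ : ℝ) : ℝ :=
  γ * (q1 + q2 * γ) / (1 + τ * (exp γ - 1))

/-- The function `ψ = e^{-γ} D(γ)² ratio'(γ)`, where `D(γ) = 1 + τ (e^γ - 1)`. -/
noncomputable def signFactor (γ : ℝ) : ℝ :=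
  (q1 + 2 * q2 * γ) * ((1 - τ) * exp (-γ) + τ) - τ * γ * (q1 + q2 * γ)

theorem ratio_eq (γ : ℝ) :
    γ * (q1 + q2 * γ) * exp (-γ) / (exp (-γ) + τ * (1 - exp (-γ))) = ratio q1 q2 τ γ := by
  rw [ratio, exp_neg, ← mul_div_mul_left _ _ (exp_ne_zero γ)]
  congr 1 <;> field_simp

theorem signFactor_zero : signFactor q1 q2 τ 0 = q1 := by
  simp [signFactor]

variable {q1 q2 τ}

theorem one_add_mul_exp_sub_one_pos {γ : ℝ} (hτ : 0 ≤ τ) (hγ : 0 ≤ γ) :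
    0 < 1 + τ * (exp γ - 1) := by
  nlinarith [one_le_exp hγ]

theorem hasDerivAt_ratio {γ : ℝ} (hD : 1 + τ * (exp γ - 1) ≠ 0) :
    HasDerivAt (ratio q1 q2 τ)
      (exp γ * signFactor q1 q2 τ γ / (1 + τ * (exp γ - 1)) ^ 2) γ := by
  have hnum : HasDerivAt (fun x => x * (q1 + q2 * x)) (q1 + 2 * q2 * γ) γ :=
    ((hasDerivAt_id' γ).mul ((hasDerivAt_id' γ).const_mul q2 |>.const_add q1)).congr_deriv
      (by ring)
  have hden : HasDerivAt (fun x => 1 + τ * (exp x - 1)) (τ * exp γ) γ := by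
    simpa using ((hasDerivAt_exp γ).sub_const 1).const_mul τ |>.const_add 1
  refine (hnum.div hden hD).congr_deriv ?_
  rw [signFactor, exp_neg]
  field_simp
  ring

theorem hasDerivAt_signFactor (γ : ℝ) :
    HasDerivAt (signFactor q1 q2 τ)
      ((2 * q2 - q1 - 2 * q2 * γ) * (τ - (τ - 1) * exp (-γ))) γ := by
  have hexp : HasDerivAt (fun x => exp (-x)) (-exp (-γ)) γ := by
    simpa using (hasDerivAt_neg γ).exp
  have hlin : HasDerivAt (fun x => q1 + 2 * q2 * x) (2 * q2) γ := by
    simpa using ((hasDerivAt_id' γ).const_mul (2 * q2)).const_add q1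
  have hquad : HasDerivAt (fun x => τ * x * (q1 + q2 * x)) (τ * (q1 + 2 * q2 * γ)) γ :=
    (((hasDerivAt_id' γ).const_mul τ).mul
      ((hasDerivAt_id' γ).const_mul q2 |>.const_add q1)).congr_deriv (by ring)
  exact ((hlin.mul ((hexp.const_mul (1 - τ)).add_const τ)).sub hquad).congr_deriv (by ring)

theorem exists_affine_sign_change (hq1 : 0 ≤ q1) (hq2 : 0 ≤ q2) :
    ∃ c, 0 ≤ c ∧ (∀ γ ∈ Ioo 0 c, 0 ≤ 2 * q2 - q1 - 2 * q2 * γ) ∧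
      ∀ γ ∈ Ioi c, 2 * q2 - q1 - 2 * q2 * γ ≤ 0 := by
  rcases hq2.eq_or_lt with rfl | hq2
  · exact ⟨0, le_rfl, fun γ hγ => absurd hγ.1 hγ.2.not_gt, fun _ _ => by linarith⟩
  set d := 1 - q1 / (2 * q2)
  have hL : ∀ γ, 2 * q2 - q1 - 2 * q2 * γ = 2 * q2 * (d - γ) := fun γ => by
    simp only [d]; field_simp
  refine ⟨max 0 d, le_max_left _ _, fun γ hγ => ?_, fun γ hγ => ?_⟩
  · have hγd : γ < d := (lt_max_iff.1 hγ.2).resolve_left hγ.1.not_gt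
    rw [hL]; nlinarith
  · have hγd : d < γ := (max_lt_iff.1 hγ).2
    rw [hL]; nlinarith

theorem signFactor_monotoneOn_antitoneOn (hq1 : 0 ≤ q1) (hq2 : 0 ≤ q2) (hτ : 0 ≤ τ) :
    ∃ c, 0 ≤ c ∧ MonotoneOn (signFactor q1 q2 τ) (Icc 0 c) ∧
      AntitoneOn (signFactor q1 q2 τ) (Ici c) := by
  obtain ⟨c, hc, hpos, hneg⟩ := exists_affine_sign_change hq1 hq2
  have hweight : ∀ γ, 0 ≤ γ → 0 ≤ τ - (τ - 1) * exp (-γ) := fun γ hγ => by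
    nlinarith [exp_pos (-γ), exp_le_one_iff.2 (neg_nonpos.2 hγ)]
  exact ⟨c, hc, monotoneOn_antitoneOn_of_hasDerivAt hc (fun γ _ => hasDerivAt_signFactor γ)
    (fun γ hγ => mul_nonneg (hpos γ hγ) (hweight γ hγ.1.le))
    (fun γ hγ => mul_nonpos_of_nonpos_of_nonneg (hneg γ hγ) (hweight γ (hc.trans hγ.le)))⟩

theorem signFactor_nonpos_of_two_le {γ : ℝ} (hq1 : 0 ≤ q1) (hq2 : 0 ≤ q2) (hτ : 1 ≤ τ)
    (hγ : 2 ≤ γ) : signFactor q1 q2 τ γ ≤ 0 := by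
  have htail : (q1 + 2 * q2 * γ) * ((1 - τ) * exp (-γ)) ≤ 0 :=
    mul_nonpos_of_nonneg_of_nonpos (by positivity)
      (mul_nonpos_of_nonpos_of_nonneg (by linarith) (exp_pos _).le)
  have hmain : q1 * (1 - γ) + q2 * γ * (2 - γ) ≤ 0 := by
    nlinarith [mul_nonneg hq1 (by linarith : (0 : ℝ) ≤ γ - 1),
      mul_nonneg (mul_nonneg hq2 (by linarith : (0 : ℝ) ≤ γ)) (by linarith : (0 : ℝ) ≤ γ - 2)]
  calc signFactor q1 q2 τ γ
      = (q1 + 2 * q2 * γ) * ((1 - τ) * exp (-γ)) + τ * (q1 * (1 - γ) + q2 * γ * (2 - γ)) := by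
        rw [signFactor]; ring
    _ ≤ 0 := add_nonpos htail (mul_nonpos_of_nonneg_of_nonpos (by linarith) hmain)

end LinearChi

theorem stmt_5_general (q1 q2 τ : ℝ)
    (hq1 : 0 ≤ q1) (hq2 : 0 ≤ q2) (hτ : 1 ≤ τ) :
    ∃ γs : ℝ, 0 ≤ γs ∧
      MonotoneOn
        (fun γ : ℝ =>
          γ * (q1 + q2 * γ) * Real.exp (-γ) /
            (Real.exp (-γ) + τ * (1 - Real.exp (-γ))))
        (Set.Icc 0 γs) ∧
      AntitoneOn
        (fun γ : ℝ =>
          γ * (q1 + q2 * γ) * Real.exp (-γ) /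
            (Real.exp (-γ) + τ * (1 - Real.exp (-γ))))
        (Set.Ici γs) := by
  obtain ⟨c, -, hmono, hanti⟩ :=
    LinearChi.signFactor_monotoneOn_antitoneOn hq1 hq2 (zero_le_one.trans hτ)
  obtain ⟨γs, hγs, hpos, hneg⟩ := exists_nonneg_nonpos_of_monotoneOn_antitoneOn hmono hanti
    (by rwa [LinearChi.signFactor_zero]) fun _ => LinearChi.signFactor_nonpos_of_two_le hq1 hq2 hτ
  have hD : ∀ γ ∈ Ici (0 : ℝ), 0 < 1 + τ * (exp γ - 1) := fun _ hγ =>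
    LinearChi.one_add_mul_exp_sub_one_pos (zero_le_one.trans hτ) hγ
  simp only [LinearChi.ratio_eq]
  exact ⟨γs, hγs, monotoneOn_antitoneOn_of_hasDerivAt hγs
    (fun γ hγ => LinearChi.hasDerivAt_ratio (hD γ hγ).ne')
    (fun γ hγ => div_nonneg (mul_nonneg (exp_pos γ).le (hpos γ (Ioo_subset_Ico_self hγ)))
      (sq_nonneg _))
    (fun γ hγ => div_nonpos_of_nonpos_of_nonneg
      (mul_nonpos_of_nonneg_of_nonpos (exp_pos γ).le (hneg γ hγ)) (sq_nonneg _))⟩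

theorem stmt_5 (q1 q2 τ : ℝ)
    (hq1 : 0 ≤ q1) (hq2 : 0 ≤ q2) (hq : q1 ≠ 0 ∨ q2 ≠ 0) (hτ : 1 ≤ τ) :
    ∃ γs : ℝ, 0 ≤ γs ∧
      MonotoneOn
        (fun γ : ℝ =>
          γ * (q1 + q2 * γ) * Real.exp (-γ) /
            (Real.exp (-γ) + τ * (1 - Real.exp (-γ))))
        (Set.Icc 0 γs) ∧
      AntitoneOn
        (fun γ : ℝ =>
          γ * (q1 + q2 * γ) * Real.exp (-γ) /
            (Real.exp (-γ) + τ * (1 - Real.exp (-γ))))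
        (Set.Ici γs) :=
  stmt_5_general q1 q2 τ hq1 hq2 hτ
end

section
/- Let p(γ) = ∑_{k≥0} c_k γ^k be a power series with real coefficients converging on [0, ∞), such that there exists M₀ with c_k ≥ 0 for k < M₀ and c_k ≤ 0 for k ≥ M₀, with at least one strictly positive and one strictly negative coefficient. Then p has at most one root in (0, ∞), and p is positive before that root and negative after it. -/
theorem stmt_7 (c : ℕ → ℝ) (M₀ : ℕ)
    (hconv : ∀ x : ℝ, 0 ≤ x → Summable (fun k => c k * x ^ k))
    (hpos : ∀ k, k < M₀ → 0 ≤ c k)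
    (hneg : ∀ k, M₀ ≤ k → c k ≤ 0)
    (hexpos : ∃ i, 0 < c i)
    (hexneg : ∃ j, c j < 0) :
    (∀ x y : ℝ, 0 < x → 0 < y →
        (∑' k, c k * x ^ k) = 0 → (∑' k, c k * y ^ k) = 0 → x = y) ∧
    (∀ r : ℝ, 0 < r → (∑' k, c k * r ^ k) = 0 →
        ∀ z : ℝ, 0 < z →
          (z < r → 0 < ∑' k, c k * z ^ k) ∧ (r < z → (∑' k, c k * z ^ k) < 0)) := by
  obtain ⟨i, hci⟩ := hexpos
  have hiM : i < M₀ := by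
    by_contra h
    exact absurd (hneg i (le_of_not_gt h)) (not_le.mpr hci)
  -- Key lemma: for 0 < x < y, p(y) * x^M₀ < p(x) * y^M₀
  have key : ∀ x y : ℝ, 0 < x → x < y →
      (∑' k, c k * y ^ k) * x ^ M₀ < (∑' k, c k * x ^ k) * y ^ M₀ := by
    intro x y hx hxy
    have hy : 0 < y := hx.trans hxy
    rw [← tsum_mul_right, ← tsum_mul_right]
    have hterm : ∀ k, c k * y ^ k * x ^ M₀ ≤ c k * x ^ k * y ^ M₀ := by
      intro k
      rcases lt_or_ge k M₀ with h | h
      · have hk : x ^ (M₀ - k) ≤ y ^ (M₀ - k) := pow_le_pow_left₀ hx.le hxy.le _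
        have e1 : x ^ M₀ = x ^ k * x ^ (M₀ - k) := by
          rw [← pow_add, Nat.add_sub_cancel' h.le]
        have e2 : y ^ M₀ = y ^ k * y ^ (M₀ - k) := by
          rw [← pow_add, Nat.add_sub_cancel' h.le]
        rw [e1, e2]
        nlinarith [mul_nonneg (mul_nonneg (mul_nonneg (hpos k h) (pow_nonneg hx.le k))
          (pow_nonneg hy.le k)) (sub_nonneg.mpr hk)]
      · have hk : x ^ (k - M₀) ≤ y ^ (k - M₀) := pow_le_pow_left₀ hx.le hxy.le _
        have e1 : x ^ k = x ^ M₀ * x ^ (k - M₀) := by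
          rw [← pow_add, Nat.add_sub_cancel' h]
        have e2 : y ^ k = y ^ M₀ * y ^ (k - M₀) := by
          rw [← pow_add, Nat.add_sub_cancel' h]
        rw [e1, e2]
        nlinarith [mul_nonneg (mul_nonneg (mul_nonneg (neg_nonneg.mpr (hneg k h))
          (pow_pos hx M₀).le) (pow_pos hy M₀).le) (sub_nonneg.mpr hk)]
    have hstrict : c i * y ^ i * x ^ M₀ < c i * x ^ i * y ^ M₀ := by
      have hk : x ^ (M₀ - i) < y ^ (M₀ - i) := by
        apply pow_lt_pow_left₀ hxy hx.le
        omega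
      have e1 : x ^ M₀ = x ^ i * x ^ (M₀ - i) := by
        rw [← pow_add, Nat.add_sub_cancel' hiM.le]
      have e2 : y ^ M₀ = y ^ i * y ^ (M₀ - i) := by
        rw [← pow_add, Nat.add_sub_cancel' hiM.le]
      rw [e1, e2]
      nlinarith [mul_pos (mul_pos (mul_pos hci (pow_pos hx i)) (pow_pos hy i))
        (sub_pos.mpr hk)]
    exact Summable.tsum_lt_tsum hterm hstrict ((hconv y hy.le).mul_right _)
      ((hconv x hx.le).mul_right _)
  constructor
  · intro x y hx hy hfx hfy
    rcases lt_trichotomy x y with h | h | h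
    · have := key x y hx h
      rw [hfx, hfy] at this
      simp at this
    · exact h
    · have := key y x hy h
      rw [hfx, hfy] at this
      simp at this
  · intro r hr hfr z hz
    constructor
    · intro hzr
      have := key z r hz hzr
      rw [hfr] at this
      have hrp : (0:ℝ) < r ^ M₀ := pow_pos hr M₀
      nlinarith
    · intro hrz
      have := key r z hr hrz
      rw [hfr] at this
      have hzp : (0:ℝ) < r ^ M₀ := pow_pos hr M₀
      nlinarith
end

section
/- Let q_1, …, q_{M} ≥ 0 with q_{M+1} = 0, satisfying k q_k ≤ (k+1) q_{k+1} for 1 ≤ k ≤ M−1, and τ ≥ 1. Define a_i = (i+1)q_{i+1}/i! − q_i/(i−1)! (with the convention q_0 = 0 and 1/(−1)! = 0) and b_i = (i+1)q_{i+1}/i!. Define c_k = τ ∑_{n=0}^{min(k,M)} a_n/(k−n)! − (τ−1) b_k·[k ≤ M−1]. Then c_k ≥ 0 for all 0 ≤ k ≤ M−1. -/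
open Finset

theorem stmt_8 (M : ℕ) (q : ℕ → ℝ) (τ : ℝ)
    (hM : 1 ≤ M)
    (hq : ∀ k, 1 ≤ k → k ≤ M → 0 ≤ q k)
    (hq0 : q 0 = 0) (hqM1 : q (M + 1) = 0)
    (hmono : ∀ k, 1 ≤ k → k ≤ M - 1 → (k : ℝ) * q k ≤ (k + 1 : ℝ) * q (k + 1))
    (hτ : 1 ≤ τ)
    (a b c : ℕ → ℝ)
    (ha : ∀ n, a n = ((n + 1 : ℝ) * q (n + 1) - (n : ℝ) * q n) / n.factorial)
    (hb : ∀ n, b n = (n + 1 : ℝ) * q (n + 1) / n.factorial)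
    (hc : ∀ k, c k =
      τ * (∑ n ∈ Finset.range (min k M + 1), a n / (k - n).factorial) -
        (τ - 1) * (if k ≤ M - 1 then b k else 0)) :
    ∀ k, k ≤ M - 1 → 0 ≤ c k := by
  intro k hk
  have hkM : k + 1 ≤ M := by omega
  set u : ℕ → ℝ := fun n => (n : ℝ) * q n with hu
  -- increments of u are nonnegative up to k
  have hstep : ∀ n, n ≤ k → u n ≤ u (n + 1) := by
    intro n hn
    rcases Nat.eq_zero_or_pos n with h0 | h1
    · subst h0
      simp only [hu, hq0]
      have := hq 1 le_rfl hM
      simp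
      linarith
    · have := hmono n h1 (by omega)
      simpa [hu] using this
  -- b k is nonneg
  have hbk : 0 ≤ b k := by
    rw [hb]
    have := hq (k + 1) (by omega) hkM
    positivity
  -- key: sum ≥ b k
  have hmin : min k M = k := by omega
  have hsum : b k ≤ ∑ n ∈ Finset.range (k + 1), a n / (k - n).factorial := by
    have hterm : ∀ n ∈ Finset.range (k + 1),
        (u (n + 1) - u n) / (k.factorial : ℝ) ≤ a n / (k - n).factorial := by
      intro n hn
      rw [Finset.mem_range] at hn
      have hnk : n ≤ k := by omega
      have hx : (0 : ℝ) ≤ u (n + 1) - u n := sub_nonneg.2 (hstep n hnk)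
      have hdvd : n.factorial * (k - n).factorial ∣ k.factorial :=
        Nat.factorial_mul_factorial_dvd_factorial hnk
      have hle : (n.factorial * (k - n).factorial : ℕ) ≤ k.factorial :=
        Nat.le_of_dvd k.factorial_pos hdvd
      have hleR : ((n.factorial * (k - n).factorial : ℕ) : ℝ) ≤ (k.factorial : ℝ) := by
        exact_mod_cast hle
      have hposR : (0 : ℝ) < ((n.factorial * (k - n).factorial : ℕ) : ℝ) := by
        positivity
      have : (u (n + 1) - u n) / (k.factorial : ℝ)
          ≤ (u (n + 1) - u n) / ((n.factorial * (k - n).factorial : ℕ) : ℝ) :=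
        div_le_div_of_nonneg_left hx hposR hleR
      calc (u (n + 1) - u n) / (k.factorial : ℝ)
          ≤ (u (n + 1) - u n) / ((n.factorial * (k - n).factorial : ℕ) : ℝ) := this
        _ = a n / (k - n).factorial := by
            rw [ha]
            push_cast
            rw [div_div]
            congr 1
            simp [hu]
    have := Finset.sum_le_sum hterm
    have htel : ∑ n ∈ Finset.range (k + 1), (u (n + 1) - u n) / (k.factorial : ℝ)
        = (u (k + 1) - u 0) / (k.factorial : ℝ) := by
      rw [← Finset.sum_div, Finset.sum_range_sub]
    have hu0 : u 0 = 0 := by simp [hu]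
    have hbk' : b k = (u (k + 1) - u 0) / (k.factorial : ℝ) := by
      rw [hb, hu0, hu]
      push_cast
      ring_nf
    rw [hbk']
    calc (u (k + 1) - u 0) / (k.factorial : ℝ)
        = ∑ n ∈ Finset.range (k + 1), (u (n + 1) - u n) / (k.factorial : ℝ) := htel.symm
      _ ≤ _ := this
  rw [hc k, hmin, if_pos hk]
  have hτ0 : (0 : ℝ) ≤ τ := by linarith
  nlinarith [mul_nonneg hτ0 (sub_nonneg.2 hsum)]
end

section
/- With notation as in the coefficient lemma (a_n = (n+1)q_{n+1}/n! − q_n/(n−1)!, k q_k ≤ (k+1)q_{k+1} for all 1 ≤ k ≤ M−1, q_{M+1} = 0, q_M > 0), the tail coefficients c_k = τ ∑_{n=0}^{M} a_n/(k−n)! for k ≥ M satisfy c_k = (τ/k!) ∑_{n=0}^{M} C(k,n) ((n+1)q_{n+1} − n q_n), and c_k < 0 for all sufficiently large k. -/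
open Finset Asymptotics Filter Nat

/-!
Writing `b n = (n + 1) q (n + 1) - n q n`, the identity `1 / (n! (k - n)!) = C(k, n) / k!` turns
`c k` into `τ / k!` times `∑_{n ≤ M} C(k, n) b n`. As `k → ∞`, `C(k, n) = Θ(k ^ n)`, so the terms
with `n < M` are `o(C(k, M))`, while the last term is `C(k, M) b M` with `b M = -M q M < 0`
because `q (M + 1) = 0`.
-/

lemma div_factorial_div_factorial_sub {n k : ℕ} (h : n ≤ k) (x : ℝ) :
    x / n ! / (k - n)! = 1 / k ! * ((k.choose n : ℝ) * x) := by
  rw [Nat.cast_choose ℝ h]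
  field_simp

lemma isLittleO_choose_choose {n M : ℕ} (h : n < M) :
    (fun k : ℕ => (k.choose n : ℝ)) =o[atTop] (fun k : ℕ => (k.choose M : ℝ)) :=
  (isTheta_choose n).trans_isLittleO <|
    ((isLittleO_pow_pow_atTop_of_lt h).comp_tendsto tendsto_natCast_atTop_atTop).trans_isTheta
      (isTheta_choose M).symm

lemma eventually_sum_choose_mul_neg {M : ℕ} {b : ℕ → ℝ} (hb : b M < 0) :
    ∀ᶠ k : ℕ in atTop, ∑ n ∈ range (M + 1), (k.choose n : ℝ) * b n < 0 := by
  have hhead : (fun k : ℕ => ∑ n ∈ range M, (k.choose n : ℝ) * b n) =o[atTop]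
      (fun k : ℕ => (k.choose M : ℝ)) :=
    IsLittleO.fun_sum fun n hn =>
      ((isLittleO_choose_choose (mem_range.mp hn)).const_mul_left (b n)).congr_left
        fun _ => mul_comm _ _
  filter_upwards [hhead.def (by linarith : 0 < -b M / 2), eventually_ge_atTop M] with k hk hMk
  have hpos : (0 : ℝ) < k.choose M := by exact_mod_cast Nat.choose_pos hMk
  rw [Real.norm_of_nonneg hpos.le] at hk
  rw [sum_range_succ]
  linarith [Real.le_norm_self (∑ n ∈ range M, (k.choose n : ℝ) * b n),
    mul_neg_of_pos_of_neg hpos hb]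

theorem stmt_9_general (M : ℕ) (q : ℕ → ℝ) (τ : ℝ)
    (hM : 1 ≤ M)
    (hqM1 : q (M + 1) = 0) (hqM : 0 < q M)
    (hτ : 1 ≤ τ)
    (a c : ℕ → ℝ)
    (ha : ∀ n, a n = ((n + 1 : ℝ) * q (n + 1) - (n : ℝ) * q n) / n.factorial)
    (hc : ∀ k, M ≤ k → c k = τ * ∑ n ∈ Finset.range (M + 1), a n / (k - n).factorial) :
    (∀ k, M ≤ k →
        c k = τ / k.factorial *
          ∑ n ∈ Finset.range (M + 1),
            (k.choose n : ℝ) * ((n + 1 : ℝ) * q (n + 1) - (n : ℝ) * q n)) ∧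
    (∃ K, ∀ k, K ≤ k → c k < 0) := by
  have hformula : ∀ k : ℕ, M ≤ k → c k = τ / k.factorial *
      ∑ n ∈ range (M + 1), (k.choose n : ℝ) * ((n + 1 : ℝ) * q (n + 1) - (n : ℝ) * q n) := by
    intro k hk
    rw [hc k hk, div_eq_mul_one_div τ, mul_assoc, mul_sum _ _ (1 / (k ! : ℝ))]
    refine congrArg (τ * ·) (sum_congr rfl fun n hn => ?_)
    rw [ha n, div_factorial_div_factorial_sub (by have := mem_range.mp hn; omega)]
  have htop : (M + 1 : ℝ) * q (M + 1) - (M : ℝ) * q M < 0 := by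
    have : (0 : ℝ) < M := by exact_mod_cast hM
    rw [hqM1]
    nlinarith
  obtain ⟨K, hK⟩ := eventually_atTop.mp
    ((eventually_sum_choose_mul_neg
      (b := fun n : ℕ => (n + 1 : ℝ) * q (n + 1) - (n : ℝ) * q n) htop).and
      (eventually_ge_atTop M))
  refine ⟨hformula, K, fun k hk => ?_⟩
  rw [hformula k (hK k hk).2]
  exact mul_neg_of_pos_of_neg (by positivity) (by exact_mod_cast (hK k hk).1)

theorem stmt_9 (M : ℕ) (q : ℕ → ℝ) (τ : ℝ)
    (hM : 1 ≤ M)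
    (hq : ∀ k, 1 ≤ k → k ≤ M → 0 ≤ q k)
    (hq0 : q 0 = 0) (hqM1 : q (M + 1) = 0) (hqM : 0 < q M)
    (hmono : ∀ k, 1 ≤ k → k ≤ M - 1 → (k : ℝ) * q k ≤ (k + 1 : ℝ) * q (k + 1))
    (hτ : 1 ≤ τ)
    (a c : ℕ → ℝ)
    (ha : ∀ n, a n = ((n + 1 : ℝ) * q (n + 1) - (n : ℝ) * q n) / n.factorial)
    (hc : ∀ k, M ≤ k → c k = τ * ∑ n ∈ Finset.range (M + 1), a n / (k - n).factorial) :
    (∀ k, M ≤ k →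
        c k = τ / k.factorial *
          ∑ n ∈ Finset.range (M + 1),
            (k.choose n : ℝ) * ((n + 1 : ℝ) * q (n + 1) - (n : ℝ) * q n)) ∧
    (∃ K, ∀ k, K ≤ k → c k < 0) :=
  stmt_9_general M q τ hM hqM1 hqM hτ a c ha hc
end
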